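/- Let $T>0$, $d \in \mathbb{N}$ with $d \ge 1$, $R \in \mathbb{R}$, and for $k = 1,\dots,d$ let $b_k > 0$, $\delta_k \in \mathbb{R}$, $c_k > 0$ with $\sum_{k=1}^d c_k = 1$. Set $\check{b}^2 = \sum_{k=1}^d (b_k c_k)^2$ and $\check{\delta} = \sum_{k=1}^d c_k(\delta_k + b_k^2/2) - \check{b}^2/2$. Suppose $w : [0,T) \times (0,\infty) \to \mathbb{R}$ is twice continuously differentiable in $s$ and continuously differentiable in $t$ and satisfies $\partial_t w(t,s) + (R - \check{\delta})\, s\, \partial_s w(t,s) + \tfrac{1}{2}\check{b}^2 s^2\, \partial_{ss} w(t,s) - R\, w(t,s) = 0$ for all $(t,s) \in [0,T) \times (0,\infty)$. Define $u(t,x) = w\big(t, \prod_{k=1}^d x_k^{c_k}\big)$ for $(t,x) \in [0,T) \times (0,\infty)^d$. Then $u$ satisfies $\partial_t u(t,x) + \sum_{k=1}^d (R - \delta_k)\, x_k\, \partial_{x_k} u(t,x) + \tfrac{1}{2}\sum_{k=1}^d b_k^2 x_k^2\, \partial_{x_k x_k} u(t,x) - R\, u(t,x) = 0$ for all $(t,x)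 \in [0,T) \times (0,\infty)^d$. -/

import Mathlib

/-!
Along the `k`-th coordinate the geometric average is `r ↦ r ^ c_k * a_k` with `a_k > 0`, and for
such a power substitution the Euler operators transform as `x ∂ₓ = c_k s ∂ₛ` and
`x² ∂ₓₓ = c_k² s² ∂ₛₛ + c_k (c_k - 1) s ∂ₛ`. Hence every term of the `d`-dimensional operator
is a multiple of `s ∂ₛ w` or `s² ∂ₛₛ w`, and using `∑ c_k = 1` the coefficients collect to
`R - δ̌` and `b̌² / 2`.
-/

open Real Finset Set

lemma prod_rpow_update {ι : Type*} [Fintype ι] [DecidableEq ι] (x c : ι → ℝ) (k : ι) (r : ℝ) :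
    ∏ j, Function.update x k r j ^ c j = r ^ c k * ∏ j ∈ univ \ {k}, x j ^ c j := by
  rw [← prod_update_of_mem (mem_univ k)]
  exact prod_congr rfl fun j _ => Function.apply_update (fun j y => y ^ c j) x k r j

lemma rpow_sub_one_mul_self {x : ℝ} (hx : 0 < x) (p : ℝ) : x ^ (p - 1) * x = x ^ p := by
  rw [← rpow_add_one hx.ne', sub_add_cancel]

section PowerSubstitution

variable {f : ℝ → ℝ} {a p x : ℝ}

lemma hasDerivAt_comp_rpow_mul (hf : DifferentiableAt ℝ f (x ^ p * a)) (hx : 0 < x) :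
    HasDerivAt (fun r => f (r ^ p * a)) (deriv f (x ^ p * a) * (p * x ^ (p - 1) * a)) x :=
  hf.hasDerivAt.comp x ((hasDerivAt_rpow_const (Or.inl hx.ne')).mul_const a)

lemma mul_deriv_comp_rpow_mul (hf : ContDiffOn ℝ 2 f (Ioi 0)) (ha : 0 < a) (hx : 0 < x) :
    x * deriv (fun r => f (r ^ p * a)) x = p * (x ^ p * a) * deriv f (x ^ p * a) := by
  have hs : 0 < x ^ p * a := by positivity
  have hf' := (hf.contDiffAt (Ioi_mem_nhds hs)).differentiableAt (by norm_num)
  rw [(hasDerivAt_comp_rpow_mul hf' hx).deriv, ← rpow_sub_one_mul_self hx p]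
  ring

lemma sq_mul_deriv_deriv_comp_rpow_mul (hf : ContDiffOn ℝ 2 f (Ioi 0)) (ha : 0 < a)
    (hx : 0 < x) :
    x ^ 2 * deriv (fun y => deriv (fun r => f (r ^ p * a)) y) x
      = p ^ 2 * (x ^ p * a) ^ 2 * deriv (fun y => deriv f y) (x ^ p * a)
        + p * (p - 1) * (x ^ p * a) * deriv f (x ^ p * a) := by
  have hf' : ∀ y > 0, DifferentiableAt ℝ f y := fun y hy =>
    (hf.contDiffAt (Ioi_mem_nhds hy)).differentiableAt (by norm_num)
  have hf'' : ∀ y > 0, DifferentiableAt ℝ (deriv f) y := fun y hy =>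
    ((hf.deriv_of_isOpen isOpen_Ioi (by norm_num : (1 : WithTop ℕ∞) + 1 ≤ 2)).contDiffAt
      (Ioi_mem_nhds hy)).differentiableAt (by norm_num)
  have hs : 0 < x ^ p * a := by positivity
  have hderiv : deriv (fun r => f (r ^ p * a))
      =ᶠ[nhds x] fun r => deriv f (r ^ p * a) * (p * r ^ (p - 1) * a) := by
    filter_upwards [Ioi_mem_nhds hx] with r hr
    exact (hasDerivAt_comp_rpow_mul (hf' _ (mul_pos (rpow_pos_of_pos hr p) ha)) hr).deriv
  have hderiv' : HasDerivAt (fun r => deriv f (r ^ p * a) * (p * r ^ (p - 1) * a))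
      (deriv (deriv f) (x ^ p * a) * (p * x ^ (p - 1) * a) * (p * x ^ (p - 1) * a)
        + deriv f (x ^ p * a) * (p * ((p - 1) * x ^ (p - 1 - 1)) * a)) x :=
    (hasDerivAt_comp_rpow_mul (hf'' _ hs) hx).mul
      (((hasDerivAt_rpow_const (Or.inl hx.ne')).const_mul p).mul_const a)
  rw [hderiv.deriv_eq, hderiv'.deriv, ← rpow_sub_one_mul_self hx p,
    ← rpow_sub_one_mul_self hx (p - 1)]
  ring

end PowerSubstitution

lemma sum_drift_add_half_sum_diffusion {ι : Type*} [Fintype ι] (R S₁ S₂ : ℝ) (δ b c : ι → ℝ)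
    (hc : ∑ k, c k = 1) :
    ∑ k, (R - δ k) * (c k * S₁) + 1 / 2 * ∑ k, b k ^ 2 * (c k ^ 2 * S₂ + c k * (c k - 1) * S₁)
      = (R - (∑ k, c k * (δ k + b k ^ 2 / 2) - (∑ k, (b k * c k) ^ 2) / 2)) * S₁
        + 1 / 2 * (∑ k, (b k * c k) ^ 2) * S₂ := by
  calc _ = ∑ k, ((R * c k - (c k * (δ k + b k ^ 2 / 2) - (b k * c k) ^ 2 / 2)) * S₁
        + 1 / 2 * (b k * c k) ^ 2 * S₂) := by
        rw [mul_sum, ← sum_add_distrib]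
        exact sum_congr rfl fun k _ => by ring
    _ = _ := by
        simp only [sum_add_distrib, ← sum_mul, sum_sub_distrib, ← mul_sum, hc, sum_div]
        ring

theorem stmt7_general (T : ℝ) (d : ℕ) (R : ℝ)
    (b δv c : Fin d → ℝ)
    (hcsum : ∑ k, c k = 1)
    (bc δc : ℝ)
    (hbc : bc = Real.sqrt (∑ k, (b k * c k) ^ 2))
    (hδc : δc = ∑ k, c k * (δv k + b k ^ 2 / 2) - bc ^ 2 / 2)
    (w : ℝ → ℝ → ℝ)
    (hws : ∀ t ∈ Set.Ico (0 : ℝ) T, ContDiffOn ℝ 2 (fun s => w t s) (Set.Ioi 0))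
    (hpde : ∀ t ∈ Set.Ico (0 : ℝ) T, ∀ s ∈ Set.Ioi (0 : ℝ),
      deriv (fun r => w r s) t + (R - δc) * s * deriv (fun y => w t y) s
        + 1 / 2 * bc ^ 2 * s ^ 2 * deriv (fun y => deriv (fun z => w t z) y) s
        - R * w t s = 0)
    (u : ℝ → (Fin d → ℝ) → ℝ)
    (hu : ∀ t x, u t x = w t (∏ k, x k ^ c k)) :
    ∀ t ∈ Set.Ico (0 : ℝ) T, ∀ x : Fin d → ℝ, (∀ k, 0 < x k) →
      deriv (fun s => u s x) t
        + ∑ k, (R - δv k) * x k * deriv (fun s => u t (Function.update x k s)) (x k)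
        + 1 / 2 * ∑ k, b k ^ 2 * x k ^ 2 *
            deriv (fun s => deriv (fun r => u t (Function.update x k r)) s) (x k)
        - R * u t x = 0 := by
  intro t ht x hx
  simp only [hu, prod_rpow_update]
  set s := ∏ k, x k ^ c k
  set a : Fin d → ℝ := fun k => ∏ j ∈ univ \ {k}, x j ^ c j
  have hs : 0 < s := prod_pos fun k _ => rpow_pos_of_pos (hx k) _
  have ha : ∀ k, 0 < a k := fun k => prod_pos fun j _ => rpow_pos_of_pos (hx j) _
  have hsplit : ∀ k, x k ^ c k * a k = s := fun k => by
    simpa using (prod_rpow_update x c k (x k)).symm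
  have hdrift : ∀ k, (R - δv k) * x k * deriv (fun r => w t (r ^ c k * a k)) (x k)
      = (R - δv k) * (c k * (s * deriv (w t) s)) := fun k => by
    rw [mul_assoc, mul_deriv_comp_rpow_mul (hws t ht) (ha k) (hx k), hsplit, mul_assoc]
  have hdiffusion : ∀ k,
      b k ^ 2 * x k ^ 2 * deriv (fun y => deriv (fun r => w t (r ^ c k * a k)) y) (x k)
        = b k ^ 2 * (c k ^ 2 * (s ^ 2 * deriv (deriv (w t)) s)
          + c k * (c k - 1) * (s * deriv (w t) s)) := fun k => by
    rw [mul_assoc, sq_mul_deriv_deriv_comp_rpow_mul (hws t ht) (ha k) (hx k), hsplit]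
    ring
  have hbc2 : bc ^ 2 = ∑ k, (b k * c k) ^ 2 := by
    rw [hbc, sq_sqrt (sum_nonneg fun k _ => sq_nonneg _)]
  have hsum := sum_drift_add_half_sum_diffusion R (s * deriv (w t) s)
    (s ^ 2 * deriv (deriv (w t)) s) δv b c hcsum
  rw [← hbc2, ← hδc] at hsum
  simp only [a] at hdrift hdiffusion
  simp only [hdrift, hdiffusion]
  linear_combination hpde t ht s hs + hsum

/-- Dimension reduction for the high-dimensional Black-Scholes PDE: if `w` solves the
one-dimensional Black-Scholes PDE with effective volatility `b̌` (where
`b̌² = ∑ (b_k c_k)²`) and effective dividend rate `δ̌ = ∑ c_k(δ_k + b_k²/2) - b̌²/2`,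
then `u(t,x) = w(t, ∏ x_k^{c_k})` solves the `d`-dimensional Black-Scholes PDE. -/
theorem stmt7 (T : ℝ) (hT : 0 < T) (d : ℕ) (hd : 1 ≤ d) (R : ℝ)
    (b δv c : Fin d → ℝ) (hb : ∀ k, 0 < b k) (hc : ∀ k, 0 < c k)
    (hcsum : ∑ k, c k = 1)
    (bc δc : ℝ)
    (hbc : bc = Real.sqrt (∑ k, (b k * c k) ^ 2))
    (hδc : δc = ∑ k, c k * (δv k + b k ^ 2 / 2) - bc ^ 2 / 2)
    (w : ℝ → ℝ → ℝ)
    (hws : ∀ t ∈ Set.Ico (0 : ℝ) T, ContDiffOn ℝ 2 (fun s => w t s) (Set.Ioi 0))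
    (hwt : ∀ s ∈ Set.Ioi (0 : ℝ), ContDiffOn ℝ 1 (fun t => w t s) (Set.Ico 0 T))
    (hpde : ∀ t ∈ Set.Ico (0 : ℝ) T, ∀ s ∈ Set.Ioi (0 : ℝ),
      deriv (fun r => w r s) t + (R - δc) * s * deriv (fun y => w t y) s
        + 1 / 2 * bc ^ 2 * s ^ 2 * deriv (fun y => deriv (fun z => w t z) y) s
        - R * w t s = 0)
    (u : ℝ → (Fin d → ℝ) → ℝ)
    (hu : ∀ t x, u t x = w t (∏ k, x k ^ c k)) :
    ∀ t ∈ Set.Ico (0 : ℝ) T, ∀ x : Fin d → ℝ, (∀ k, 0 < x k) →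
      deriv (fun s => u s x) t
        + ∑ k, (R - δv k) * x k * deriv (fun s => u t (Function.update x k s)) (x k)
        + 1 / 2 * ∑ k, b k ^ 2 * x k ^ 2 *
            deriv (fun s => deriv (fun r => u t (Function.update x k r)) s) (x k)
        - R * u t x = 0 :=
  stmt7_general T d R b δv c hcsum bc δc hbc hδc w hws hpde u hu
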